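/- Let (A, B, C) be a positive solution of the backward cross curvature flow ODE system (X⁻) on an interval I, and define a = A/B and c = C/B on I. Then a and c satisfy da/dt = (8/(B a c)²) · a(a+1)(a+c−1)·φ₃ and dc/dt = −(8/(B a c)²) · c(1−c)(a+c+1)·φ₁ on I, where φ₁ = −3a²+1+c²−2c−2ac−2a and φ₃ = −3c²+a²+1+2c−2ac+2a. -/

import Mathlib

open Real Filter Set Topology

/-- `F₁ = -3A² + B² + C² - 2BC - 2AC - 2AB`. -/
noncomputable def F1 (A B C : ℝ) : ℝ :=
  -3 * A ^ 2 + B ^ 2 + C ^ 2 - 2 * B * C - 2 * A * C - 2 * A * B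

/-- `F₂ = -3B² + A² + C² + 2BC + 2AC - 2AB`. -/
noncomputable def F2 (A B C : ℝ) : ℝ :=
  -3 * B ^ 2 + A ^ 2 + C ^ 2 + 2 * B * C + 2 * A * C - 2 * A * B

/-- `F₃ = -3C² + A² + B² + 2BC - 2AC + 2AB`. -/
noncomputable def F3 (A B C : ℝ) : ℝ :=
  -3 * C ^ 2 + A ^ 2 + B ^ 2 + 2 * B * C - 2 * A * C + 2 * A * B

/-- `(A, B, C)` is a positive solution of the backward cross curvature flow ODE
system (X⁻) on the set `I`. -/
def IsBackwardXCFSolOn (A B C : ℝ → ℝ) (I : Set ℝ) : Prop :=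
  ∀ t ∈ I, 0 < A t ∧ 0 < B t ∧ 0 < C t ∧
    HasDerivAt A (2 * A t * F2 (A t) (B t) (C t) * F3 (A t) (B t) (C t) /
      (A t * B t * C t) ^ 2) t ∧
    HasDerivAt B (2 * B t * F3 (A t) (B t) (C t) * F1 (A t) (B t) (C t) /
      (A t * B t * C t) ^ 2) t ∧
    HasDerivAt C (2 * C t * F1 (A t) (B t) (C t) * F2 (A t) (B t) (C t) /
      (A t * B t * C t) ^ 2) t

/-- `φ₁ = -3a² + 1 + c² - 2c - 2ac - 2a`. -/
noncomputable def phi1 (a c : ℝ) : ℝ :=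
  -3 * a ^ 2 + 1 + c ^ 2 - 2 * c - 2 * a * c - 2 * a

/-- `φ₃ = -3c² + a² + 1 + 2c - 2ac + 2a`. -/
noncomputable def phi3 (a c : ℝ) : ℝ :=
  -3 * c ^ 2 + a ^ 2 + 1 + 2 * c - 2 * a * c + 2 * a

/-! Along (X⁻) the ratio `A/B` has logarithmic derivative `2F₃(F₂ - F₁)/(ABC)²` and `C/B` has
`2F₁(F₂ - F₃)/(ABC)²`. The differences factor, `F₂ - F₁ = 4(A + B)(A + C - B)` and
`F₂ - F₃ = 4(C - B)(A + B + C)`, and since the `Fᵢ` are quadratic forms,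
`F₁ = B² φ₁(A/B, C/B)` and `F₃ = B² φ₃(A/B, C/B)`. -/

theorem HasDerivAt.div_of_logDeriv {𝕜 : Type*} [NontriviallyNormedField 𝕜] {f g : 𝕜 → 𝕜}
    {u v x : 𝕜} (hf : HasDerivAt f (f x * u) x) (hg : HasDerivAt g (g x * v) x) (hx : g x ≠ 0) :
    HasDerivAt (fun y => f y / g y) (f x / g x * (u - v)) x :=
  (hf.fun_div hg hx).congr_deriv (by field_simp)

theorem F2_sub_F1 (A B C : ℝ) : F2 A B C - F1 A B C = 4 * (A + B) * (A + C - B) := by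
  unfold F1 F2
  ring

theorem F2_sub_F3 (A B C : ℝ) : F2 A B C - F3 A B C = 4 * (C - B) * (A + B + C) := by
  unfold F2 F3
  ring

theorem F1_eq_sq_mul_phi1 {A B C : ℝ} (hB : B ≠ 0) :
    F1 A B C = B ^ 2 * phi1 (A / B) (C / B) := by
  unfold F1 phi1
  field_simp

theorem F3_eq_sq_mul_phi3 {A B C : ℝ} (hB : B ≠ 0) :
    F3 A B C = B ^ 2 * phi3 (A / B) (C / B) := by
  unfold F3 phi3
  field_simp

namespace IsBackwardXCFSolOn

variable {A B C : ℝ → ℝ} {I : Set ℝ} {t : ℝ}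

theorem hasDerivAt_A_div_B (hsol : IsBackwardXCFSolOn A B C I) (ht : t ∈ I) :
    HasDerivAt (fun s => A s / B s) (A t / B t *
      (8 * F3 (A t) (B t) (C t) * (A t + B t) * (A t + C t - B t) / (A t * B t * C t) ^ 2)) t := by
  obtain ⟨-, hB, -, hA', hB', -⟩ := hsol t ht
  have hAlog : HasDerivAt A (A t * (2 * F2 (A t) (B t) (C t) * F3 (A t) (B t) (C t) /
      (A t * B t * C t) ^ 2)) t := hA'.congr_deriv (by ring)
  have hBlog : HasDerivAt B (B t * (2 * F3 (A t) (B t) (C t) * F1 (A t) (B t) (C t) /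
      (A t * B t * C t) ^ 2)) t := hB'.congr_deriv (by ring)
  refine (hAlog.div_of_logDeriv hBlog hB.ne').congr_deriv ?_
  linear_combination 2 * A t / B t * F3 (A t) (B t) (C t) / (A t * B t * C t) ^ 2 *
    F2_sub_F1 (A t) (B t) (C t)

theorem hasDerivAt_C_div_B (hsol : IsBackwardXCFSolOn A B C I) (ht : t ∈ I) :
    HasDerivAt (fun s => C s / B s) (C t / B t *
      (8 * F1 (A t) (B t) (C t) * (C t - B t) * (A t + B t + C t) / (A t * B t * C t) ^ 2)) t := by
  obtain ⟨-, hB, -, -, hB', hC'⟩ := hsol t ht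
  have hBlog : HasDerivAt B (B t * (2 * F1 (A t) (B t) (C t) * F3 (A t) (B t) (C t) /
      (A t * B t * C t) ^ 2)) t := hB'.congr_deriv (by ring)
  have hClog : HasDerivAt C (C t * (2 * F1 (A t) (B t) (C t) * F2 (A t) (B t) (C t) /
      (A t * B t * C t) ^ 2)) t := hC'.congr_deriv (by ring)
  refine (hClog.div_of_logDeriv hBlog hB.ne').congr_deriv ?_
  linear_combination 2 * C t / B t * F1 (A t) (B t) (C t) / (A t * B t * C t) ^ 2 *
    F2_sub_F3 (A t) (B t) (C t)

end IsBackwardXCFSolOn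

/-- Projectivization of the backward cross curvature flow (X⁻): the ratios `a = A/B` and
`c = C/B` satisfy `da/dt = (8/(Bac)²) a(a+1)(a+c-1)φ₃` and
`dc/dt = -(8/(Bac)²) c(1-c)(a+c+1)φ₁`. -/
theorem backward_xcf_ratio_ode (A B C : ℝ → ℝ) (I : Set ℝ)
    (hsol : IsBackwardXCFSolOn A B C I) :
    ∀ t ∈ I,
      HasDerivAt (fun s => A s / B s)
        (8 / (B t * (A t / B t) * (C t / B t)) ^ 2 * ((A t / B t) * (A t / B t + 1) *
          (A t / B t + C t / B t - 1)) * phi3 (A t / B t) (C t / B t)) t ∧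
      HasDerivAt (fun s => C s / B s)
        (-(8 / (B t * (A t / B t) * (C t / B t)) ^ 2) * ((C t / B t) * (1 - C t / B t) *
          (A t / B t + C t / B t + 1)) * phi1 (A t / B t) (C t / B t)) t := by
  intro t ht
  obtain ⟨-, hB, -⟩ := hsol t ht
  refine ⟨(hsol.hasDerivAt_A_div_B ht).congr_deriv ?_,
    (hsol.hasDerivAt_C_div_B ht).congr_deriv ?_⟩
  · rw [F3_eq_sq_mul_phi3 hB.ne']
    field_simp
  · rw [F1_eq_sq_mul_phi1 hB.ne']
    field_simp
    ring
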